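/- Let A and A' be finite lists of distinct symbols such that no three symbols appear in the same order in A and A', and split each into halves A_0, A_1 and A'_0, A'_1. Then ∑_{ε ∈ {0,1} such that A_ε and A'_ε are intersection-reverse} |A_ε ∩ A'_ε|² ≥ 2 · |A_0 ∩ A'_0| · |A_1 ∩ A'_1|. -/

import Mathlib

/-- Three symbols appear in the same order in lists `A` and `B`:
there are pairwise distinct symbols `a, b, c` such that the list `[a, b, c]`
is a subsequence of both `A` and `B`. -/
def SameOrder3 {α : Type*} (A B : List α) : Prop :=
  ∃ a b c : α, a ≠ b ∧ a ≠ c ∧ b ≠ c ∧ [a, b, c].Sublist A ∧ [a, b, c].Sublist B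

/-- Two lists of distinct symbols are intersection-reverse if their common
elements appear in reverse order in the two lists. -/
def IntRev {α : Type*} (B B' : List α) : Prop :=
  ∀ a ∈ B, ∀ b ∈ B, a ≠ b → a ∈ B' → b ∈ B' →
    ([a, b].Sublist B ↔ [b, a].Sublist B')

instance {α : Type*} [DecidableEq α] (B B' : List α) : Decidable (IntRev B B') := by
  unfold IntRev; infer_instance

/-- The first half of a list: its initial segment of length `⌈ℓ/2⌉`. -/
def half0 {α : Type*} (A : List α) : List α := A.take ((A.length + 1) / 2)

/-- The second half of a list: its final segment of length `⌊ℓ/2⌋`. -/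
def half1 {α : Type*} (A : List α) : List α := A.drop ((A.length + 1) / 2)

/-- `interCard B B'` is the number of symbols occurring in both `B` and `B'`. -/
def interCard {α : Type*} [DecidableEq α] (B B' : List α) : ℕ :=
  (B.filter fun x => decide (x ∈ B')).length

/-!
A common element of the first halves followed by a pair of symbols in the same order in both
second halves would be three symbols in the same order in `A` and `A'`; likewise for a same-order
pair in the first halves followed by a common element of the second halves. Failure of
intersection-reversal is exactly such a same-order pair, so if one pair of halves is not
intersection-reverse, the other pair of halves has no common element and the right-hand side
vanishes. Otherwise the inequality is `2xy ≤ x² + y²`.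
-/

section
variable {α : Type*}

theorem half0_append_half1 (A : List α) : half0 A ++ half1 A = A :=
  List.take_append_drop _ _

theorem List.pair_sublist_or_swap_sublist {l : List α} {a b : α}
    (ha : a ∈ l) (hb : b ∈ l) (hab : a ≠ b) : [a, b].Sublist l ∨ [b, a].Sublist l := by
  induction l with
  | nil => simp at ha
  | cons x xs ih =>
    rw [List.mem_cons] at ha hb
    rcases ha with rfl | ha <;> rcases hb with rfl | hb
    · exact absurd rfl hab
    · exact .inl ((List.singleton_sublist.2 hb).cons_cons _)
    · exact .inr ((List.singleton_sublist.2 ha).cons_cons _)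
    · exact (ih ha hb).imp (.cons x) (.cons x)

theorem exists_pair_sublist_of_not_intRev {B B' : List α} (h : ¬ IntRev B B') :
    ∃ a b, a ≠ b ∧ [a, b].Sublist B ∧ [a, b].Sublist B' := by
  simp only [IntRev, not_forall, iff_iff_implies_and_implies, not_and_or] at h
  obtain ⟨a, haB, b, hbB, hab, haB', hbB', ⟨hB, hB'⟩ | ⟨hB', hB⟩⟩ := h
  · exact ⟨a, b, hab, hB, (List.pair_sublist_or_swap_sublist haB' hbB' hab).resolve_right hB'⟩
  · exact ⟨b, a, hab.symm, (List.pair_sublist_or_swap_sublist haB hbB hab).resolve_left hB, hB'⟩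

variable [DecidableEq α]

theorem interCard_eq_zero_iff {B B' : List α} : interCard B B' = 0 ↔ ∀ a ∈ B, a ∉ B' := by
  simp [interCard, List.filter_eq_nil_iff]

variable {B₀ B₁ B₀' B₁' : List α}

theorem interCard_left_eq_zero_of_not_intRev_right (hB : (B₀ ++ B₁).Nodup)
    (h3 : ¬ SameOrder3 (B₀ ++ B₁) (B₀' ++ B₁')) (h : ¬ IntRev B₁ B₁') :
    interCard B₀ B₀' = 0 := by
  obtain ⟨b, c, hbc, hB₁, hB₁'⟩ := exists_pair_sublist_of_not_intRev h
  refine interCard_eq_zero_iff.2 fun a ha ha' => h3 ⟨a, b, c, ?_, ?_, hbc,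
    (List.singleton_sublist.2 ha).append hB₁, (List.singleton_sublist.2 ha').append hB₁'⟩
  all_goals exact fun h => List.disjoint_of_nodup_append hB ha (h ▸ hB₁.subset (by simp))

theorem interCard_right_eq_zero_of_not_intRev_left (hB : (B₀ ++ B₁).Nodup)
    (h3 : ¬ SameOrder3 (B₀ ++ B₁) (B₀' ++ B₁')) (h : ¬ IntRev B₀ B₀') :
    interCard B₁ B₁' = 0 := by
  obtain ⟨a, b, hab, hB₀, hB₀'⟩ := exists_pair_sublist_of_not_intRev h
  refine interCard_eq_zero_iff.2 fun c hc hc' => h3 ⟨a, b, c, hab, ?_, ?_,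
    hB₀.append (List.singleton_sublist.2 hc), hB₀'.append (List.singleton_sublist.2 hc')⟩
  all_goals exact fun h => List.disjoint_of_nodup_append hB (hB₀.subset (by simp)) (h ▸ hc)

end

theorem stmt_7_general {α : Type*} [DecidableEq α] (A A' : List α)
    (hA : A.Nodup) (h3 : ¬ SameOrder3 A A') :
    (if IntRev (half0 A) (half0 A') then (interCard (half0 A) (half0 A')) ^ 2 else 0)
      + (if IntRev (half1 A) (half1 A') then (interCard (half1 A) (half1 A')) ^ 2 else 0)
      ≥ 2 * interCard (half0 A) (half0 A') * interCard (half1 A) (half1 A') := by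
  rw [← half0_append_half1 A] at hA h3
  rw [← half0_append_half1 A'] at h3
  by_cases h0 : IntRev (half0 A) (half0 A')
  · by_cases h1 : IntRev (half1 A) (half1 A')
    · simpa only [h0, h1, if_true] using two_mul_le_add_sq _ _
    · simp [interCard_left_eq_zero_of_not_intRev_right hA h3 h1]
  · simp [interCard_right_eq_zero_of_not_intRev_left hA h3 h0]

/-- Let `A` and `A'` be lists of distinct symbols such that no three symbols
appear in the same order in `A` and `A'`, split into halves. Then
`∑_{ε : A_ε, A'_ε int-rev} |A_ε ∩ A'_ε|² ≥ 2 |A_0 ∩ A'_0| |A_1 ∩ A'_1|`. -/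
theorem stmt_7 {α : Type*} [DecidableEq α] (A A' : List α)
    (hA : A.Nodup) (hA' : A'.Nodup) (h3 : ¬ SameOrder3 A A') :
    (if IntRev (half0 A) (half0 A') then (interCard (half0 A) (half0 A')) ^ 2 else 0)
      + (if IntRev (half1 A) (half1 A') then (interCard (half1 A) (half1 A')) ^ 2 else 0)
      ≥ 2 * interCard (half0 A) (half0 A') * interCard (half1 A) (half1 A') :=
  stmt_7_general A A' hA h3
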